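/- arXiv:0805.1330 — 3 statements merged into one kernel-verified Lean document; each statement's English description precedes it below -/
import Mathlib

section
/- For every real α < 1 there exist constants C₁, C₂ > 0 (depending only on α) such that for every γ > 0: C₁ (e^γ − 1)/γ ≤ ∫₀¹ e^{γx} x^{−α} dx ≤ C₂ (e^γ − 1)/γ. -/
open MeasureTheory Real Set

/-!
Split `[0, 1]` at `1 / 2`. On `[1 / 2, 1]` the weight `x ^ (-α)` lies between two positive
constants, and since `exp (γ * x)` is increasing this half carries at least half of
`∫₀¹ exp (γ * x) dx = (exp γ - 1) / γ`. On `[0, 1 / 2]` the integrand is at most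
`exp (γ / 2) * x ^ (-α)`, which is integrable because `α < 1`, and
`exp (γ / 2) ≤ 2 * (exp γ - 1) / γ`.
-/

theorem integral_exp_mul {γ : ℝ} (hγ : γ ≠ 0) (a b : ℝ) :
    ∫ x in a..b, exp (γ * x) = (exp (γ * b) - exp (γ * a)) / γ := by
  rw [intervalIntegral.integral_comp_mul_left (fun y => exp y) hγ, integral_exp, smul_eq_mul]
  field_simp

theorem Real.rpow_mem_uIcc_of_mem_Icc {a b x : ℝ} (p : ℝ) (ha : 0 < a) (hx : x ∈ Icc a b) :
    x ^ p ∈ uIcc (a ^ p) (b ^ p) := by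
  have hx₀ : 0 < x := ha.trans_le hx.1
  rcases le_total 0 p with hp | hp
  · exact Icc_subset_uIcc ⟨rpow_le_rpow ha.le hx.1 hp, rpow_le_rpow hx₀.le hx.2 hp⟩
  · exact Icc_subset_uIcc'
      ⟨rpow_le_rpow_of_nonpos hx₀ hx.2 hp, rpow_le_rpow_of_nonpos ha hx.1 hp⟩

section ExpWeight

variable {γ : ℝ} {w : ℝ → ℝ}

theorem exp_sub_one_div_le_two_mul_integral_exp_mul (hγ : 0 < γ) :
    (exp γ - 1) / γ ≤ 2 * ∫ x in (1 / 2 : ℝ)..1, exp (γ * x) := by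
  rw [integral_exp_mul hγ.ne', mul_div_assoc', mul_one]
  have h : exp γ = exp (γ * (1 / 2)) ^ 2 := by rw [← exp_nat_mul]; ring_nf
  gcongr
  nlinarith [sq_nonneg (exp (γ * (1 / 2)) - 1)]

theorem exp_half_le_two_mul_exp_sub_one_div (hγ : 0 < γ) :
    exp (γ * (1 / 2)) ≤ 2 * ((exp γ - 1) / γ) := by
  have h : exp γ = exp (γ * (1 / 2)) ^ 2 := by rw [← exp_nat_mul]; ring_nf
  have h₁ := add_one_le_exp (γ * (1 / 2))
  rw [← mul_div_assoc (2 : ℝ), le_div_iff₀ hγ]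
  nlinarith [exp_pos (γ * (1 / 2))]

theorem integral_exp_mul_half_one_le (hγ : 0 < γ) :
    ∫ x in (1 / 2 : ℝ)..1, exp (γ * x) ≤ (exp γ - 1) / γ := by
  rw [integral_exp_mul hγ.ne', mul_one]
  gcongr
  exact one_le_exp (by positivity)

theorem intervalIntegrable_exp_mul_mul {a b : ℝ} (hw : IntervalIntegrable w volume a b) :
    IntervalIntegrable (fun x => exp (γ * x) * w x) volume a b :=
  hw.continuousOn_mul (by fun_prop)

theorem mul_integral_exp_mul_le {a b m : ℝ} (hab : a ≤ b) (hw : IntervalIntegrable w volume a b)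
    (hmw : ∀ x ∈ Icc a b, m ≤ w x) :
    m * ∫ x in a..b, exp (γ * x) ≤ ∫ x in a..b, exp (γ * x) * w x := by
  rw [← intervalIntegral.integral_const_mul]
  refine intervalIntegral.integral_mono_on hab (Continuous.intervalIntegrable (by fun_prop) _ _)
    (intervalIntegrable_exp_mul_mul hw) fun x hx => ?_
  rw [mul_comm]
  exact mul_le_mul_of_nonneg_left (hmw x hx) (exp_pos _).le

theorem integral_exp_mul_mul_le {a b M : ℝ} (hab : a ≤ b) (hw : IntervalIntegrable w volume a b)
    (hMw : ∀ x ∈ Icc a b, w x ≤ M) :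
    ∫ x in a..b, exp (γ * x) * w x ≤ M * ∫ x in a..b, exp (γ * x) := by
  rw [← intervalIntegral.integral_const_mul]
  refine intervalIntegral.integral_mono_on hab (intervalIntegrable_exp_mul_mul hw)
    (Continuous.intervalIntegrable (by fun_prop) _ _) fun x hx => ?_
  rw [mul_comm]
  exact mul_le_mul_of_nonneg_right (hMw x hx) (exp_pos _).le

theorem integral_exp_mul_mul_le_exp_mul_integral {a b : ℝ} (hγ : 0 ≤ γ) (hab : a ≤ b)
    (hw : IntervalIntegrable w volume a b) (hw₀ : ∀ x ∈ Icc a b, 0 ≤ w x) :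
    ∫ x in a..b, exp (γ * x) * w x ≤ exp (γ * b) * ∫ x in a..b, w x := by
  rw [← intervalIntegral.integral_const_mul]
  refine intervalIntegral.integral_mono_on hab (intervalIntegrable_exp_mul_mul hw)
    (hw.const_mul _) fun x hx => ?_
  gcongr
  exacts [hw₀ x hx, hx.2]

theorem integral_exp_mul_mul_split (hw₁ : IntervalIntegrable w volume 0 (1 / 2))
    (hw₂ : IntervalIntegrable w volume (1 / 2) 1) :
    ∫ x in (0 : ℝ)..1, exp (γ * x) * w x =
      (∫ x in (0 : ℝ)..(1 / 2), exp (γ * x) * w x) +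
        ∫ x in (1 / 2 : ℝ)..1, exp (γ * x) * w x :=
  (intervalIntegral.integral_add_adjacent_intervals (intervalIntegrable_exp_mul_mul hw₁)
    (intervalIntegrable_exp_mul_mul hw₂)).symm

theorem mul_exp_sub_one_div_le_integral_exp_mul_mul {m : ℝ} (hγ : 0 < γ)
    (hw₁ : IntervalIntegrable w volume 0 (1 / 2)) (hw₂ : IntervalIntegrable w volume (1 / 2) 1)
    (hw₀ : ∀ x ∈ Icc (0 : ℝ) (1 / 2), 0 ≤ w x) (hm : 0 ≤ m)
    (hmw : ∀ x ∈ Icc (1 / 2 : ℝ) 1, m ≤ w x) :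
    m / 2 * ((exp γ - 1) / γ) ≤ ∫ x in (0 : ℝ)..1, exp (γ * x) * w x := by
  have hfirst : 0 ≤ ∫ x in (0 : ℝ)..(1 / 2), exp (γ * x) * w x :=
    intervalIntegral.integral_nonneg (by norm_num) fun x hx =>
      mul_nonneg (exp_pos _).le (hw₀ x hx)
  rw [integral_exp_mul_mul_split hw₁ hw₂]
  calc m / 2 * ((exp γ - 1) / γ)
      ≤ m / 2 * (2 * ∫ x in (1 / 2 : ℝ)..1, exp (γ * x)) := by
        gcongr; exact exp_sub_one_div_le_two_mul_integral_exp_mul hγ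
    _ = m * ∫ x in (1 / 2 : ℝ)..1, exp (γ * x) := by ring
    _ ≤ ∫ x in (1 / 2 : ℝ)..1, exp (γ * x) * w x :=
        mul_integral_exp_mul_le (by norm_num) hw₂ hmw
    _ ≤ _ := le_add_of_nonneg_left hfirst

theorem integral_exp_mul_mul_le_mul_exp_sub_one_div {M : ℝ} (hγ : 0 < γ)
    (hw₁ : IntervalIntegrable w volume 0 (1 / 2)) (hw₂ : IntervalIntegrable w volume (1 / 2) 1)
    (hw₀ : ∀ x ∈ Icc (0 : ℝ) (1 / 2), 0 ≤ w x)
    (hMw : ∀ x ∈ Icc (1 / 2 : ℝ) 1, w x ≤ M) :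
    ∫ x in (0 : ℝ)..1, exp (γ * x) * w x ≤
      (M + 2 * ∫ x in (0 : ℝ)..(1 / 2), w x) * ((exp γ - 1) / γ) := by
  have hM : 0 ≤ M := (hw₀ (1 / 2) (by norm_num)).trans (hMw (1 / 2) (by norm_num))
  have hw_int : 0 ≤ ∫ x in (0 : ℝ)..(1 / 2), w x :=
    intervalIntegral.integral_nonneg (by norm_num) hw₀
  have hfirst : ∫ x in (0 : ℝ)..(1 / 2), exp (γ * x) * w x
      ≤ 2 * ((exp γ - 1) / γ) * ∫ x in (0 : ℝ)..(1 / 2), w x :=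
    (integral_exp_mul_mul_le_exp_mul_integral hγ.le (by norm_num) hw₁ hw₀).trans
      (mul_le_mul_of_nonneg_right (exp_half_le_two_mul_exp_sub_one_div hγ) hw_int)
  have hsecond : ∫ x in (1 / 2 : ℝ)..1, exp (γ * x) * w x ≤ M * ((exp γ - 1) / γ) :=
    (integral_exp_mul_mul_le (by norm_num) hw₂ hMw).trans
      (mul_le_mul_of_nonneg_left (integral_exp_mul_half_one_le hγ) hM)
  rw [integral_exp_mul_mul_split hw₁ hw₂]
  linarith

end ExpWeight

/-- Lemma 5.2, third inequality: for `α < 1` there are constants `C₁, C₂ > 0` such that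
for all `γ > 0`, `C₁ (e^γ − 1)/γ ≤ ∫₀¹ e^{γx} x^{−α} dx ≤ C₂ (e^γ − 1)/γ`. -/
theorem stmt_3 (α : ℝ) (hα : α < 1) :
    ∃ C₁ C₂ : ℝ, 0 < C₁ ∧ 0 < C₂ ∧ ∀ γ : ℝ, 0 < γ →
      C₁ * ((Real.exp γ - 1) / γ)
          ≤ ∫ x in Ioc (0 : ℝ) 1, Real.exp (γ * x) * x ^ (-α) ∧
      ∫ x in Ioc (0 : ℝ) 1, Real.exp (γ * x) * x ^ (-α)
          ≤ C₂ * ((Real.exp γ - 1) / γ) := by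
  have hw (a b : ℝ) : IntervalIntegrable (fun x : ℝ => x ^ (-α)) volume a b :=
    intervalIntegral.intervalIntegrable_rpow' (by linarith)
  have hw₀ : ∀ x ∈ Icc (0 : ℝ) (1 / 2), 0 ≤ x ^ (-α) := fun x hx => rpow_nonneg hx.1 _
  have hbounds :
      ∀ x ∈ Icc (1 / 2 : ℝ) 1, x ^ (-α) ∈ uIcc ((1 / 2 : ℝ) ^ (-α)) (1 ^ (-α)) :=
    fun x hx => rpow_mem_uIcc_of_mem_Icc _ (by norm_num) hx
  set m := min ((1 / 2 : ℝ) ^ (-α)) (1 ^ (-α))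
  set M := max ((1 / 2 : ℝ) ^ (-α)) (1 ^ (-α))
  set c := ∫ x in (0 : ℝ)..(1 / 2), x ^ (-α)
  have hm : 0 < m := by positivity
  have hc : 0 < c :=
    intervalIntegral.intervalIntegral_pos_of_pos_on (hw _ _) (fun x hx => rpow_pos_of_pos hx.1 _)
      (by norm_num)
  refine ⟨m / 2, M + 2 * c, by positivity, by positivity, fun γ hγ => ?_⟩
  rw [← intervalIntegral.integral_of_le zero_le_one]
  exact ⟨mul_exp_sub_one_div_le_integral_exp_mul_mul hγ (hw _ _) (hw _ _) hw₀ hm.le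
      fun x hx => (hbounds x hx).1,
    integral_exp_mul_mul_le_mul_exp_sub_one_div hγ (hw _ _) (hw _ _) hw₀
      fun x hx => (hbounds x hx).2⟩
end

section
/- For every real α < 2 there exist constants 0 < c ≤ C and γ₀ > 0 such that for all γ ≤ −γ₀: c (−γ) ≤ ∫₀¹ (e^{γx} − 1 − γx) x^{−α} dx ≤ C (−γ). (That is, the integral is weakly asymptotically of order |γ| as γ → −∞; note e^{z} − 1 − z ≥ 0 for all real z, so the integral is nonnegative.) -/
/-!
For `z ≤ 0` we have `0 ≤ e^z - 1 - z ≤ -z`, so the integrand is at most `-γ x^{1-α}`, whose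
integral over `(0, 1]` is `-γ / (2 - α)` because `α < 2`. Conversely `e^z - 1 - z ≥ -z - 1`, and
for `x ∈ (1/2, 1]` and `γ ≤ -4` this is at least `-γ / 4`; restricting the (nonnegative)
integrand to `(1/2, 1]` gives the lower bound `(-γ / 4) ∫_{1/2}^1 x^{-α} dx`.
-/

open MeasureTheory Real Set

lemma exp_sub_one_sub_nonneg (z : ℝ) : 0 ≤ exp z - 1 - z := by
  linarith [add_one_le_exp z]

lemma exp_sub_one_sub_le_neg {z : ℝ} (hz : z ≤ 0) : exp z - 1 - z ≤ -z := by
  linarith [exp_le_one_iff.mpr hz]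

lemma neg_sub_one_le_exp_sub_one_sub (z : ℝ) : -z - 1 ≤ exp z - 1 - z := by
  linarith [exp_pos z]

section ExpRemainderIntegral

variable {α γ : ℝ}

lemma exp_sub_one_sub_mul_rpow_le (hγ : γ ≤ 0) {x : ℝ} (hx : 0 < x) :
    (exp (γ * x) - 1 - γ * x) * x ^ (-α) ≤ -γ * x ^ (1 - α) :=
  calc (exp (γ * x) - 1 - γ * x) * x ^ (-α) ≤ -(γ * x) * x ^ (-α) :=
        mul_le_mul_of_nonneg_right
          (exp_sub_one_sub_le_neg (mul_nonpos_of_nonpos_of_nonneg hγ hx.le)) (rpow_nonneg hx.le _)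
    _ = -γ * x ^ (1 - α) := by rw [sub_eq_add_neg, rpow_add hx, rpow_one]; ring

lemma integrableOn_const_mul_rpow_Ioc_zero_one (hα : α < 2) (a : ℝ) :
    IntegrableOn (fun x : ℝ => a * x ^ (1 - α)) (Ioc 0 1) :=
  ((intervalIntegrable_iff_integrableOn_Ioc_of_le zero_le_one).mp
    (intervalIntegral.intervalIntegrable_rpow' (by linarith))).const_mul a

lemma integrableOn_exp_sub_one_sub_mul_rpow (hα : α < 2) (hγ : γ ≤ 0) :
    IntegrableOn (fun x => (exp (γ * x) - 1 - γ * x) * x ^ (-α)) (Ioc 0 1) := by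
  refine (integrableOn_const_mul_rpow_Ioc_zero_one hα (-γ)).mono'
    (Measurable.aestronglyMeasurable (by fun_prop)) ?_
  filter_upwards [ae_restrict_mem measurableSet_Ioc] with x hx
  rw [norm_of_nonneg (mul_nonneg (exp_sub_one_sub_nonneg _) (rpow_nonneg hx.1.le _))]
  exact exp_sub_one_sub_mul_rpow_le hγ hx.1

lemma integral_exp_sub_one_sub_mul_rpow_le (hα : α < 2) (hγ : γ ≤ 0) :
    ∫ x in Ioc 0 1, (exp (γ * x) - 1 - γ * x) * x ^ (-α) ≤ (2 - α)⁻¹ * -γ :=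
  calc ∫ x in Ioc 0 1, (exp (γ * x) - 1 - γ * x) * x ^ (-α)
      ≤ ∫ x in Ioc 0 1, -γ * x ^ (1 - α) :=
        setIntegral_mono_on (integrableOn_exp_sub_one_sub_mul_rpow hα hγ)
          (integrableOn_const_mul_rpow_Ioc_zero_one hα _) measurableSet_Ioc
          fun x hx => exp_sub_one_sub_mul_rpow_le hγ hx.1
    _ = (2 - α)⁻¹ * -γ := by
        rw [integral_const_mul, ← intervalIntegral.integral_of_le zero_le_one,
          integral_rpow (Or.inl (by linarith)), one_rpow, zero_rpow (by linarith),
          show 1 - α + 1 = 2 - α by ring]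
        ring

lemma le_integral_exp_sub_one_sub_mul_rpow (hα : α < 2) (hγ : γ ≤ -4) :
    (∫ x in (1 / 2 : ℝ)..1, x ^ (-α)) / 4 * -γ ≤
      ∫ x in Ioc 0 1, (exp (γ * x) - 1 - γ * x) * x ^ (-α) := by
  have hint := integrableOn_exp_sub_one_sub_mul_rpow hα (γ := γ) (by linarith)
  have hsub : Ioc (1 / 2 : ℝ) 1 ⊆ Ioc 0 1 := Ioc_subset_Ioc (by norm_num) le_rfl
  have hrpow : IntegrableOn (fun x : ℝ => x ^ (-α)) (Ioc (1 / 2) 1) :=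
    (intervalIntegral.intervalIntegrable_rpow (Or.inr (by norm_num [uIcc_of_le]))).1
  calc (∫ x in (1 / 2 : ℝ)..1, x ^ (-α)) / 4 * -γ
      = ∫ x in Ioc (1 / 2) 1, -γ / 4 * x ^ (-α) := by
        rw [integral_const_mul, intervalIntegral.integral_of_le (by norm_num)]; ring
    _ ≤ ∫ x in Ioc (1 / 2) 1, (exp (γ * x) - 1 - γ * x) * x ^ (-α) := by
        refine setIntegral_mono_on (hrpow.const_mul _) (hint.mono_set hsub) measurableSet_Ioc
          fun x hx => mul_le_mul_of_nonneg_right ?_ (rpow_nonneg (by linarith [hx.1]) _)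
        nlinarith [neg_sub_one_le_exp_sub_one_sub (γ * x), hx.1]
    _ ≤ ∫ x in Ioc 0 1, (exp (γ * x) - 1 - γ * x) * x ^ (-α) := by
        refine setIntegral_mono_set hint ?_ hsub.eventuallyLE
        filter_upwards [ae_restrict_mem measurableSet_Ioc] with x hx
        exact mul_nonneg (exp_sub_one_sub_nonneg _) (rpow_nonneg hx.1.le _)

end ExpRemainderIntegral

/-- Lemma 5.3, first case `α < 2`: as `γ → −∞`,
`∫₀¹ (e^{γx} − 1 − γx) x^{−α} dx ≈ −γ`. -/
theorem stmt_4 (α : ℝ) (hα : α < 2) :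
    ∃ c C γ₀ : ℝ, 0 < c ∧ c ≤ C ∧ 0 < γ₀ ∧ ∀ γ : ℝ, γ ≤ -γ₀ →
      c * (-γ) ≤ ∫ x in Ioc (0 : ℝ) 1, (Real.exp (γ * x) - 1 - γ * x) * x ^ (-α) ∧
      ∫ x in Ioc (0 : ℝ) 1, (Real.exp (γ * x) - 1 - γ * x) * x ^ (-α) ≤ C * (-γ) := by
  have hlower := fun γ (hγ : γ ≤ -4) => le_integral_exp_sub_one_sub_mul_rpow hα hγ
  have hupper := fun γ (hγ : γ ≤ 0) => integral_exp_sub_one_sub_mul_rpow_le hα hγ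
  have hc : 0 < (∫ x in (1 / 2 : ℝ)..1, x ^ (-α)) / 4 := by
    refine div_pos (intervalIntegral.intervalIntegral_pos_of_pos_on ?_
      (fun x hx => rpow_pos_of_pos (by linarith [hx.1]) _) (by norm_num)) four_pos
    exact intervalIntegral.intervalIntegrable_rpow (Or.inr (by norm_num [uIcc_of_le]))
  refine ⟨_, (2 - α)⁻¹, 4, hc, ?_, four_pos, fun γ hγ => ⟨hlower γ hγ, hupper γ (by linarith)⟩⟩
  -- the two bounds at `γ = -4` force `c ≤ C`
  exact le_of_mul_le_mul_right ((hlower (-4) le_rfl).trans (hupper (-4) (by norm_num))) (by norm_num)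
end

section
/- Let ε > 0, let ν be a nonnegative Borel measure on ℝ with ν({0}) = 0, ν(ℝ \ [−ε, ε]) = 0 and ∫ x² dν(x) < ∞, let σ² > 0 and b ∈ ℝ, and define g(u) := σ² u + b + ∫ (e^{ux} − 1) x dν(x). Then g has exactly one root: there is a unique u* ∈ ℝ with g(u*) = 0. -/
/-!
The jump part `I u = ∫ (e^{ux} − 1) x dν` is nondecreasing in `u`, since for each fixed `x` the
integrand `(e^{ux} − 1) x` is. Hence `g = σ²u + b + I` is strictly increasing, with
`g u ≥ σ²u + b + I 0` for `u ≥ 0` and `g u ≤ σ²u + b + I 0` for `u ≤ 0`, so it tends to `±∞` at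
`±∞`. On `{|u| ≤ R}` the integrand is dominated by `R e^{Rε} x²`, so `I` is continuous by dominated
convergence, and the intermediate value theorem gives the root.
-/

open MeasureTheory Real Set Filter Topology

lemma Real.abs_exp_sub_one_le_abs_mul_exp_abs (t : ℝ) : |exp t - 1| ≤ |t| * exp |t| := by
  rcases le_or_gt 0 t with ht | ht
  · rw [abs_of_nonneg ht, abs_of_nonneg (by linarith [one_le_exp ht])]
    have h : exp (-t) * exp t = 1 := by rw [← exp_add, neg_add_cancel, exp_zero]
    nlinarith [add_one_le_exp (-t), exp_pos t]
  · rw [abs_of_neg ht, abs_of_nonpos (by linarith [exp_le_one_iff.mpr ht.le])]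
    nlinarith [add_one_le_exp t, one_le_exp (neg_nonneg.mpr ht.le)]

lemma monotone_exp_mul_sub_one_mul (x : ℝ) : Monotone fun u : ℝ => (exp (u * x) - 1) * x := by
  intro u v huv
  rcases le_total 0 x with hx | hx
  · have := exp_le_exp.mpr (mul_le_mul_of_nonneg_right huv hx)
    exact mul_le_mul_of_nonneg_right (by linarith) hx
  · have := exp_le_exp.mpr (mul_le_mul_of_nonpos_right huv hx)
    exact mul_le_mul_of_nonpos_right (by linarith) hx

lemma norm_exp_mul_sub_one_mul_le {ε R u x : ℝ} (hu : |u| ≤ R) (hx : |x| ≤ ε) :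
    ‖(exp (u * x) - 1) * x‖ ≤ R * exp (R * ε) * x ^ 2 := by
  have hR : 0 ≤ R := (abs_nonneg u).trans hu
  have hux : |u * x| ≤ R * |x| := by rw [abs_mul]; gcongr
  have hexp : exp |u * x| ≤ exp (R * ε) := exp_le_exp.mpr (hux.trans (by gcongr))
  calc ‖(exp (u * x) - 1) * x‖ = |exp (u * x) - 1| * |x| := abs_mul _ _
    _ ≤ |u * x| * exp |u * x| * |x| := by gcongr; exact abs_exp_sub_one_le_abs_mul_exp_abs _
    _ ≤ R * |x| * exp (R * ε) * |x| := by gcongr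
    _ = R * exp (R * ε) * x ^ 2 := by rw [← sq_abs x]; ring

section JumpIntegral

variable {ν : Measure ℝ} {ε : ℝ}

lemma integrable_exp_mul_sub_one_mul (hsupp : ∀ᵐ x ∂ν, |x| ≤ ε)
    (hsq : Integrable (fun x : ℝ => x ^ 2) ν) (u : ℝ) :
    Integrable (fun x => (exp (u * x) - 1) * x) ν :=
  (hsq.const_mul (|u| * exp (|u| * ε))).mono' (by fun_prop)
    (hsupp.mono fun _ hx => norm_exp_mul_sub_one_mul_le le_rfl hx)

lemma continuous_integral_exp_mul_sub_one_mul (hsupp : ∀ᵐ x ∂ν, |x| ≤ ε)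
    (hsq : Integrable (fun x : ℝ => x ^ 2) ν) :
    Continuous fun u => ∫ x, (exp (u * x) - 1) * x ∂ν := by
  refine continuous_iff_continuousAt.mpr fun u₀ => ?_
  set R := |u₀| + 1
  have hnear : ∀ᶠ u in 𝓝 u₀, |u| ≤ R :=
    continuous_abs.continuousAt.eventually (eventually_le_nhds (lt_add_one |u₀|))
  refine continuousAt_of_dominated (Eventually.of_forall fun _ => by fun_prop)
    (hnear.mono fun u hu => hsupp.mono fun x hx => norm_exp_mul_sub_one_mul_le hu hx)
    (hsq.const_mul (R * exp (R * ε))) (Eventually.of_forall fun x => by fun_prop)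

lemma monotone_integral_exp_mul_sub_one_mul (hsupp : ∀ᵐ x ∂ν, |x| ≤ ε)
    (hsq : Integrable (fun x : ℝ => x ^ 2) ν) :
    Monotone fun u => ∫ x, (exp (u * x) - 1) * x ∂ν := fun u v huv =>
  integral_mono (integrable_exp_mul_sub_one_mul hsupp hsq u)
    (integrable_exp_mul_sub_one_mul hsupp hsq v) fun x => monotone_exp_mul_sub_one_mul x huv

end JumpIntegral

lemma existsUnique_mul_add_add_eq_zero {σ2 : ℝ} (hσ2 : 0 < σ2) (b : ℝ) {I : ℝ → ℝ}
    (hmono : Monotone I) (hcont : Continuous I) : ∃! u, σ2 * u + b + I u = 0 := by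
  set f := fun u => σ2 * u + b + I u
  have hlin : Tendsto (fun u => σ2 * u + b + I 0) atTop atTop :=
    tendsto_atTop_add_const_right _ _ (tendsto_atTop_add_const_right _ _
      (tendsto_id.const_mul_atTop hσ2))
  have hlin' : Tendsto (fun u => σ2 * u + b + I 0) atBot atBot :=
    tendsto_atBot_add_const_right _ _ (tendsto_atBot_add_const_right _ _
      (tendsto_id.const_mul_atBot hσ2))
  have htop : Tendsto f atTop atTop := tendsto_atTop_mono' _
    ((eventually_ge_atTop 0).mono fun u hu => by simp only [f]; linarith [hmono hu]) hlin
  have hbot : Tendsto f atBot atBot := tendsto_atBot_mono' _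
    ((eventually_le_atBot 0).mono fun u hu => by simp only [f]; linarith [hmono hu]) hlin'
  have hstrict : StrictMono f := fun u v huv => by
    simp only [f]; linarith [hmono huv.le, mul_lt_mul_of_pos_left huv hσ2]
  obtain ⟨u, hu⟩ := (by fun_prop : Continuous f).surjective htop hbot 0
  exact ⟨u, hu, fun v hv => hstrict.injective (hv.trans hu.symm)⟩

theorem stmt_16_general (ε : ℝ) (ν : Measure ℝ)
    (hsupp : ν (Icc (-ε) ε)ᶜ = 0)
    (hmom : ∫⁻ x, ENNReal.ofReal (x ^ 2) ∂ν < ⊤)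
    (σ2 : ℝ) (hσ2 : 0 < σ2) (b : ℝ)
    (g : ℝ → ℝ)
    (hg : ∀ u : ℝ, g u = σ2 * u + b + ∫ x, (Real.exp (u * x) - 1) * x ∂ν) :
    ∃! u : ℝ, g u = 0 := by
  have hsupp' : ∀ᵐ x ∂ν, |x| ≤ ε := measure_eq_zero_iff_ae_notMem.mp hsupp |>.mono
    fun x hx => abs_le.mpr (not_not.mp hx)
  have hsq : Integrable (fun x : ℝ => x ^ 2) ν :=
    ⟨by fun_prop, (hasFiniteIntegral_iff_ofReal (ae_of_all _ sq_nonneg)).mpr hmom⟩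
  simpa only [hg] using existsUnique_mul_add_add_eq_zero hσ2 b
    (monotone_integral_exp_mul_sub_one_mul hsupp' hsq)
    (continuous_integral_exp_mul_sub_one_mul hsupp' hsq)

/-- Case 1 (`σ ≠ 0`) in the proof of Lemma 3.2: for a Lévy measure `ν` supported in
`[−ε, ε]` with finite second moment and `σ² > 0`, the function
`g(u) = σ²u + b + ∫ (e^{ux} − 1)x dν` has exactly one root. -/
theorem stmt_16 (ε : ℝ) (hε : 0 < ε) (ν : Measure ℝ) (hν0 : ν {0} = 0)
    (hsupp : ν (Icc (-ε) ε)ᶜ = 0)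
    (hmom : ∫⁻ x, ENNReal.ofReal (x ^ 2) ∂ν < ⊤)
    (σ2 : ℝ) (hσ2 : 0 < σ2) (b : ℝ)
    (g : ℝ → ℝ)
    (hg : ∀ u : ℝ, g u = σ2 * u + b + ∫ x, (Real.exp (u * x) - 1) * x ∂ν) :
    ∃! u : ℝ, g u = 0 :=
  stmt_16_general ε ν hsupp hmom σ2 hσ2 b g hg
end
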